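/- arXiv:2604.14876 — 3 statements merged into one kernel-verified Lean document; each statement's English description precedes it below -/
import Mathlib

section
/- The moment-bounded class L_{1,1} = { ν on ℝ : E_ν[X²] ≤ 1 } is not discrimination equivalent. Specifically, taking ν = δ₁ (the point mass at 1, with mean 1) and ν' = Bernoulli(p) for any p ∈ (0,1), both in L_{1,1} with m(ν) > m(ν'), one has inf { KL(ν̃, ν) / KL_inf^{L_{1,1}}(ν̃, m(ν')) : ν̃ ∈ L_{1,1}, m(ν̃) < m(ν') } = +∞. -/
/-!
A measure `ν̃` with mean below `1` is not absolutely continuous with respect to `δ₁`, so every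
numerator `KL(ν̃, δ₁)` is infinite. Every denominator `KL_inf(ν̃, p)` is finite: pick `c ∈ (p, 1)`
that is not an atom of `ν̃` (atoms are countable). The mixture `(1 - t) ν̃ + t δ_c` with the right
weight `t < 1` has mean `p`, stays in `L_{1,1}` since the moment constraint is convex and `c² ≤ 1`,
and has density `(1 - t)⁻¹` against it on the support of `ν̃`, so `KL = -log (1 - t) < ∞`.
-/

open MeasureTheory ProbabilityTheory Filter Set
open scoped ENNReal Classical

noncomputable section

namespace BanditFrag

/-- The mean of a measure on `ℝ`. -/
def mean (ν : Measure ℝ) : ℝ := ∫ x, x ∂ν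

/-- Kullback–Leibler divergence `KL(ν,ν') = ∫ log (dν/dν') dν`, equal to `∞` when `ν` is not
absolutely continuous with respect to `ν'` (or the integral is not defined). -/
def KL (ν ν' : Measure ℝ) : ℝ≥0∞ :=
  if ν ≪ ν' ∧ Integrable (fun x => Real.log ((ν.rnDeriv ν' x).toReal)) ν then
    ENNReal.ofReal (∫ x, Real.log ((ν.rnDeriv ν' x).toReal) ∂ν)
  else ⊤

/-- `KL_inf^M(ν, x) = inf { KL(ν,ν') : ν' ∈ M, mean ν' ≥ x }`. -/
def KLinf (M : Set (Measure ℝ)) (ν : Measure ℝ) (x : ℝ) : ℝ≥0∞ :=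
  ⨅ ν' ∈ {ρ | ρ ∈ M ∧ x ≤ mean ρ}, KL ν ν'

/-- Empirical measure of the first `n` entries of a real sequence. -/
def empSeq (x : ℕ → ℝ) (n : ℕ) : Measure ℝ :=
  (n : ℝ≥0∞)⁻¹ • ∑ s ∈ Finset.range n, Measure.dirac (x s)

/-- `X 0, X 1, …` is an i.i.d. sequence with common law `ν` on `(Ω, P)`. -/
structure IsIID {Ω : Type} [MeasurableSpace Ω] (P : Measure Ω) (X : ℕ → Ω → ℝ)
    (ν : Measure ℝ) : Prop where
  meas : ∀ n, Measurable (X n)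
  indep : iIndepFun X P
  law : ∀ n, P.map (X n) = ν

/-- The exploration-bonus shift `g(n) = C₁ log(1+n) + C₂`. -/
def gFun (C₁ C₂ : ℝ) (n : ℕ) : ℝ := C₁ * Real.log (1 + n) + C₂

/-- Assumption 1: a time-uniform exponential deviation bound for the empirical `KL_inf`
at the true mean. -/
def Assumption1 (L : Set (Measure ℝ)) (g : ℕ → ℝ) (ν : Measure ℝ) : Prop :=
  ∀ (Ω : Type) (_ : MeasurableSpace Ω) (P : Measure Ω), IsProbabilityMeasure P →
    ∀ X : ℕ → Ω → ℝ, IsIID P X ν → ∀ x : ℝ,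
      P {ω | ∃ n : ℕ,
          x ≤ (n : ℝ) * (KLinf L (empSeq (fun s => X s ω) n) (mean ν)).toReal - g n}
        ≤ ENNReal.ofReal (Real.exp (-x))

/-- Assumption 2 with explicit constants `d₀`, `c`. -/
def Assumption2With (L : Set (Measure ℝ)) (ν : Measure ℝ) (δ d₀ c : ℝ) : Prop :=
  ∀ d : ℝ, 0 < d → d < d₀ →
    ∀ (Ω : Type) (_ : MeasurableSpace Ω) (P : Measure Ω), IsProbabilityMeasure P →
      ∀ X : ℕ → Ω → ℝ, IsIID P X ν → ∀ n : ℕ,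
        P {ω | (KLinf L (empSeq (fun s => X s ω) n) (mean ν + δ)).toReal
            ≤ (KLinf L ν (mean ν + δ)).toReal - d}
          ≤ ENNReal.ofReal (Real.exp (-((n : ℝ) * c * d ^ 2)))

/-- Assumption 2: a lower-deviation exponential concentration bound for the empirical
`KL_inf` above the mean. -/
def Assumption2 (L : Set (Measure ℝ)) (ν : Measure ℝ) : Prop :=
  ∀ δ : ℝ, 0 < δ → ∃ d₀ > (0 : ℝ), ∃ c > (0 : ℝ), Assumption2With L ν δ d₀ c

/-! ### Bandit interaction -/

/-- A history is a finite list of (arm, reward) pairs. -/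
abbrev Hist (K : ℕ) := List (Fin K × ℝ)

/-- A (deterministic) bandit algorithm maps the observed history to the next arm. -/
abbrev Policy (K : ℕ) := Hist K → Fin K

/-- Number of pulls of arm `a` recorded in a history. -/
def pullsIn {K : ℕ} (a : Fin K) (h : Hist K) : ℕ :=
  (h.filter fun p => decide (p.1 = a)).length

/-- Empirical reward distribution of arm `a` from a history. -/
def empHist {K : ℕ} (a : Fin K) (h : Hist K) : Measure ℝ :=
  (pullsIn a h : ℝ≥0∞)⁻¹ •
    ((h.filter fun p => decide (p.1 = a)).map fun p => Measure.dirac p.2).sum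

/-- The `KL_inf`-UCB index `U_a(N_a(t), t)` computed from a history, with exploration
threshold `f n t` where `n` is the number of pulls of `a`. -/
def ucbIndex (L : Set (Measure ℝ)) (f : ℕ → ℕ → ℝ) {K : ℕ} (a : Fin K) (h : Hist K)
    (t : ℕ) : ℝ :=
  sSup {x : ℝ |
    KLinf L (empHist a h) x ≤ ENNReal.ofReal (f (pullsIn a h) t / (pullsIn a h : ℝ))}

/-- `π` is a Generalized `KL_inf`-UCB algorithm for class `L` with exploration functions
`f a n t` (`n` = current number of pulls of `a`, `t` = current time): it first pulls each arm
once, and afterwards always pulls an arm maximizing the `KL_inf`-UCB index. -/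
structure IsKLinfUCB (L : Set (Measure ℝ)) {K : ℕ} (f : Fin K → ℕ → ℕ → ℝ)
    (π : Policy K) : Prop where
  init : ∀ h : Hist K, (hl : h.length < K) → π h = ⟨h.length, hl⟩
  argmax : ∀ h : Hist K, K ≤ h.length → ∀ b : Fin K,
    ucbIndex L (f b) b h h.length ≤ ucbIndex L (f (π h)) (π h) h h.length

/-- The exploration function `f_a(t) = log t + 2 log log t + g(N_a(t))` with
`g(n) = C₁ log(1+n) + C₂`. -/
def fUCB (C₁ C₂ : ℝ) : ℕ → ℕ → ℝ :=
  fun n t => Real.log t + 2 * Real.log (Real.log t) + gFun C₁ C₂ n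

/-- The history generated by running policy `π` on the table of rewards `z`
(`z t a` is the reward obtained if arm `a` is pulled at round `t`). -/
def hist {K : ℕ} (π : Policy K) (z : ℕ → Fin K → ℝ) : ℕ → Hist K
  | 0 => []
  | t + 1 => hist π z t ++ [(π (hist π z t), z t (π (hist π z t)))]

/-- The arm pulled at round `t` (0-indexed). -/
def arm {K : ℕ} (π : Policy K) (z : ℕ → Fin K → ℝ) (t : ℕ) : Fin K := π (hist π z t)

/-- `N_a(T)`: the number of pulls of arm `a` during the first `T` rounds. -/
def pulls {K : ℕ} (π : Policy K) (z : ℕ → Fin K → ℝ) (a : Fin K) (T : ℕ) : ℕ :=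
  ((Finset.range T).filter fun s => arm π z s = a).card

/-- The stochastic environment: `Z t a` is the (would-be) reward of arm `a` at round `t`;
the rewards are independent and `Z t a` has law `ν a`.  Together with a policy `π`, this
realizes the interaction measure `P^π_ν` on trajectories. -/
structure IsBanditEnv {K : ℕ} {Ω : Type} [MeasurableSpace Ω] (P : Measure Ω)
    (Z : ℕ → Fin K → Ω → ℝ) (ν : Fin K → Measure ℝ) : Prop where
  prob : IsProbabilityMeasure P
  meas : ∀ t a, Measurable (Z t a)
  indep : iIndepFun (fun p : ℕ × Fin K => Z p.1 p.2) P
  law : ∀ t a, P.map (Z t a) = ν a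

/-- The reward table seen along the outcome `ω`. -/
def tab {K : ℕ} {Ω : Type} (Z : ℕ → Fin K → Ω → ℝ) (ω : Ω) : ℕ → Fin K → ℝ :=
  fun t a => Z t a ω

/-- `π` is `M^K`-optimal: in every environment with arm distributions in `M`, every
suboptimal arm `a` satisfies `E[N_a(T)] / log T → 1 / KL_inf^M(ν_a, μ*)`. -/
def IsOptimal (M : Set (Measure ℝ)) (K : ℕ) (π : Policy K) : Prop :=
  ∀ (Ω : Type) (_ : MeasurableSpace Ω) (P : Measure Ω) (Z : ℕ → Fin K → Ω → ℝ)
    (ν : Fin K → Measure ℝ), IsBanditEnv P Z ν → (∀ a, ν a ∈ M) →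
    ∀ a : Fin K, mean (ν a) < ⨆ b, mean (ν b) →
      Tendsto (fun T : ℕ => (∫ ω, (pulls π (tab Z ω) a T : ℝ) ∂P) / Real.log T) atTop
        (nhds (1 / (KLinf M (ν a) (⨆ b, mean (ν b))).toReal))

/-- `inf { KL(ν̃, νj) / KL_inf^M(ν̃, μ) : ν̃ ∈ M, mean ν̃ < μ }`. -/
def ratioInf (M : Set (Measure ℝ)) (νj : Measure ℝ) (μ : ℝ) : ℝ≥0∞ :=
  ⨅ νt ∈ {ρ | ρ ∈ M ∧ mean ρ < μ}, KL νt νj / KLinf M νt μ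

/-- A class `M` is discrimination equivalent if for every `ν, ν' ∈ M` with
`mean ν' < mean ν`, `inf { KL(ν̃, ν)/KL_inf^M(ν̃, mean ν') : ν̃ ∈ M, mean ν̃ < mean ν' } = 1`. -/
def DiscrimEquiv (M : Set (Measure ℝ)) : Prop :=
  ∀ ν ∈ M, ∀ ν' ∈ M, mean ν' < mean ν → ratioInf M ν (mean ν') = 1


/-- The moment-bounded class `L_{B,ε} = { ν : E_ν[|X|^{1+ε}] ≤ B }` (probability measures). -/
def momentClass (B ε : ℝ) : Set (Measure ℝ) :=
  {ν | IsProbabilityMeasure ν ∧ ∫⁻ x, ENNReal.ofReal (|x| ^ (1 + ε)) ∂ν ≤ ENNReal.ofReal B}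

/-- The Bernoulli(p) distribution on ℝ: mass `p` at `1` and `1−p` at `0`. -/
def bern (p : ℝ) : Measure ℝ :=
  ENNReal.ofReal p • Measure.dirac 1 + ENNReal.ofReal (1 - p) • Measure.dirac 0

def mixDirac (t : ℝ) (ν : Measure ℝ) (c : ℝ) : Measure ℝ :=
  ENNReal.ofReal (1 - t) • ν + ENNReal.ofReal t • Measure.dirac c

lemma ofReal_one_sub_add_ofReal {t : ℝ} (ht : t ∈ Icc (0 : ℝ) 1) :
    ENNReal.ofReal (1 - t) + ENNReal.ofReal t = 1 := by
  rw [← ENNReal.ofReal_add (by linarith [ht.2]) ht.1, sub_add_cancel, ENNReal.ofReal_one]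

lemma isProbabilityMeasure_mixDirac {ν : Measure ℝ} [IsProbabilityMeasure ν] {t : ℝ}
    (ht : t ∈ Icc (0 : ℝ) 1) (c : ℝ) : IsProbabilityMeasure (mixDirac t ν c) :=
  ⟨by simp [mixDirac, ofReal_one_sub_add_ofReal ht]⟩

lemma lintegral_mixDirac {f : ℝ → ℝ≥0∞} (hf : Measurable f) (t : ℝ) (ν : Measure ℝ) (c : ℝ) :
    ∫⁻ x, f x ∂(mixDirac t ν c) =
      ENNReal.ofReal (1 - t) * ∫⁻ x, f x ∂ν + ENNReal.ofReal t * f c := by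
  rw [mixDirac, lintegral_add_measure, lintegral_smul_measure, lintegral_smul_measure,
    lintegral_dirac' c hf, smul_eq_mul, smul_eq_mul]

lemma mean_mixDirac {ν : Measure ℝ} (hν : Integrable (fun x => x) ν) {t : ℝ}
    (ht : t ∈ Icc (0 : ℝ) 1) (c : ℝ) : mean (mixDirac t ν c) = (1 - t) * mean ν + t * c := by
  have hc : Integrable (fun x => x) (Measure.dirac c) := integrable_dirac enorm_lt_top
  rw [mean, mixDirac, integral_add_measure (hν.smul_measure ENNReal.ofReal_ne_top)
    (hc.smul_measure ENNReal.ofReal_ne_top), integral_smul_measure, integral_smul_measure,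
    integral_dirac, ENNReal.toReal_ofReal (by linarith [ht.2]), ENNReal.toReal_ofReal ht.1,
    smul_eq_mul, smul_eq_mul, mean]

lemma mixDirac_mem_momentClass {B ε : ℝ} {ν : Measure ℝ} (hν : ν ∈ momentClass B ε) {c : ℝ}
    (hc : |c| ^ (1 + ε) ≤ B) {t : ℝ} (ht : t ∈ Icc (0 : ℝ) 1) :
    mixDirac t ν c ∈ momentClass B ε := by
  have := hν.1
  refine ⟨isProbabilityMeasure_mixDirac ht c, ?_⟩
  rw [lintegral_mixDirac (by fun_prop)]
  calc ENNReal.ofReal (1 - t) * ∫⁻ x, ENNReal.ofReal (|x| ^ (1 + ε)) ∂ν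
        + ENNReal.ofReal t * ENNReal.ofReal (|c| ^ (1 + ε))
      ≤ ENNReal.ofReal (1 - t) * ENNReal.ofReal B + ENNReal.ofReal t * ENNReal.ofReal B := by
        gcongr
        exact hν.2
    _ = ENNReal.ofReal B := by rw [← add_mul, ofReal_one_sub_add_ofReal ht, one_mul]

lemma dirac_mem_momentClass {B ε a : ℝ} (ha : |a| ^ (1 + ε) ≤ B) :
    Measure.dirac a ∈ momentClass B ε :=
  ⟨inferInstance, by rw [lintegral_dirac' a (by fun_prop)]; exact ENNReal.ofReal_le_ofReal ha⟩

lemma integrable_id_of_mem_momentClass {B ε : ℝ} (hε : 0 ≤ ε) {ν : Measure ℝ}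
    (hν : ν ∈ momentClass B ε) : Integrable (fun x => x) ν := by
  have := hν.1
  have hle : ∀ x : ℝ, |x| ≤ 1 + |x| ^ (1 + ε) := fun x => by
    rcases le_total |x| 1 with hx | hx
    · linarith [Real.rpow_nonneg (abs_nonneg x) (1 + ε)]
    · linarith [Real.self_le_rpow_of_one_le hx (by linarith : (1 : ℝ) ≤ 1 + ε)]
  refine ⟨measurable_id.aestronglyMeasurable, ?_⟩
  calc ∫⁻ x, ‖x‖ₑ ∂ν ≤ ∫⁻ x, 1 + ENNReal.ofReal (|x| ^ (1 + ε)) ∂ν := by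
        refine lintegral_mono fun x => ?_
        rw [Real.enorm_eq_ofReal_abs, ← ENNReal.ofReal_one,
          ← ENNReal.ofReal_add zero_le_one (by positivity)]
        exact ENNReal.ofReal_le_ofReal (hle x)
    _ = 1 + ∫⁻ x, ENNReal.ofReal (|x| ^ (1 + ε)) ∂ν := by
        rw [lintegral_add_left measurable_const, lintegral_const, measure_univ, mul_one]
    _ < ⊤ := ENNReal.add_lt_top.2 ⟨ENNReal.one_lt_top, hν.2.trans_lt ENNReal.ofReal_lt_top⟩

lemma exists_measure_singleton_eq_zero_mem_Ioo (ν : Measure ℝ) [SFinite ν] {a b : ℝ}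
    (hab : a < b) : ∃ c ∈ Ioo a b, ν {c} = 0 := by
  have hatoms : {c : ℝ | 0 < ν {x | x = c}}.Countable :=
    Measure.countable_meas_level_set_pos measurable_id
  obtain ⟨c, hc, hcab⟩ := (hatoms.dense_compl ℝ).exists_between hab
  exact ⟨c, hcab, by simpa using hc⟩

lemma KL_mixDirac {ν : Measure ℝ} [IsProbabilityMeasure ν] {c : ℝ} (hc : ν {c} = 0) {t : ℝ}
    (ht : t < 1) : KL ν (mixDirac t ν c) = ENNReal.ofReal (-Real.log (1 - t)) := by
  set a := ENNReal.ofReal (1 - t)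
  have ha : a ≠ 0 := by simpa [a] using ht
  have : IsFiniteMeasure (a • ν) := ν.smul_finite ENNReal.ofReal_ne_top
  have : IsFiniteMeasure (ENNReal.ofReal t • Measure.dirac c) :=
    (Measure.dirac c).smul_finite ENNReal.ofReal_ne_top
  have hνa : ν ≪ a • ν := Measure.absolutelyContinuous_smul ha
  have hsing : ν ⟂ₘ Measure.dirac c := ⟨{c}, measurableSet_singleton c, hc, by simp⟩
  have hsing' : a • ν ⟂ₘ ENNReal.ofReal t • Measure.dirac c := (hsing.symm.smul _).symm.smul _
  have hrn : ν.rnDeriv (mixDirac t ν c) =ᵐ[ν] fun _ => a⁻¹ := by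
    filter_upwards [hνa.ae_le (Measure.rnDeriv_add_right_of_mutuallySingular (μ := ν) hsing'),
      Measure.rnDeriv_smul_right_of_ne_top ν ν ha ENNReal.ofReal_ne_top,
      Measure.rnDeriv_self ν] with x h₁ h₂ h₃
    rw [mixDirac, h₁, h₂, Pi.smul_apply, h₃, smul_eq_mul, mul_one]
  have hlog : ∀ᵐ x ∂ν, Real.log (ν.rnDeriv (mixDirac t ν c) x).toReal = -Real.log (1 - t) := by
    filter_upwards [hrn] with x hx
    rw [hx, ENNReal.toReal_inv, ENNReal.toReal_ofReal (by linarith), Real.log_inv]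
  rw [KL, if_pos ⟨hνa.add_right _, (integrable_const _).congr (hlog.mono fun x hx => hx.symm)⟩,
    integral_congr_ae hlog, integral_const, probReal_univ, one_smul]

lemma KLinf_ne_top_of_mixDirac_mem {M : Set (Measure ℝ)} {ν : Measure ℝ} [IsProbabilityMeasure ν]
    (hν : Integrable (fun x => x) ν) {x y : ℝ} (hmean : mean ν < x) (hxy : x < y)
    (hM : ∀ c ∈ Ioo x y, ∀ t ∈ Icc (0 : ℝ) 1, mixDirac t ν c ∈ M) : KLinf M ν x ≠ ⊤ := by
  obtain ⟨c, hc, hνc⟩ := exists_measure_singleton_eq_zero_mem_Ioo ν hxy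
  have hcm : 0 < c - mean ν := by linarith [hc.1]
  set t := (x - mean ν) / (c - mean ν)
  have ht : t ∈ Icc (0 : ℝ) 1 :=
    ⟨div_nonneg (by linarith) hcm.le, (div_le_one hcm).2 (by linarith [hc.1])⟩
  have ht1 : t < 1 := (div_lt_one hcm).2 (by linarith [hc.1])
  have hmix : mean (mixDirac t ν c) = x := by
    rw [mean_mixDirac hν ht]
    have : t * (c - mean ν) = x - mean ν := div_mul_cancel₀ _ hcm.ne'
    linarith
  refine ne_top_of_le_ne_top ?_ (iInf₂_le (mixDirac t ν c) ⟨hM c hc t ht, hmix.ge⟩)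
  rw [KL_mixDirac hνc ht1]
  exact ENNReal.ofReal_ne_top

lemma KL_dirac_eq_top {ν : Measure ℝ} [IsProbabilityMeasure ν] {a : ℝ} (h : mean ν ≠ a) :
    KL ν (Measure.dirac a) = ⊤ := by
  refine if_neg fun ⟨hac, _⟩ => h ?_
  have hae : ∀ᵐ x ∂ν, x = a := hac (by simp [ae_dirac_eq] : ∀ᵐ x ∂Measure.dirac a, x = a)
  rw [mean, integral_congr_ae hae, integral_const, probReal_univ, one_smul]

lemma ratioInf_eq_top {M : Set (Measure ℝ)} {νj : Measure ℝ} {μ : ℝ}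
    (h : ∀ ν ∈ M, mean ν < μ → KL ν νj = ⊤ ∧ KLinf M ν μ ≠ ⊤) : ratioInf M νj μ = ⊤ := by
  refine eq_top_iff.2 (le_iInf₂ fun ν hν => ?_)
  obtain ⟨hKL, hKLinf⟩ := h ν hν.1 hν.2
  rw [hKL, ENNReal.top_div_of_ne_top hKLinf]

lemma not_discrimEquiv_of_ratioInf_eq_top {M : Set (Measure ℝ)} {ν ν' : Measure ℝ} (hν : ν ∈ M)
    (hν' : ν' ∈ M) (hlt : mean ν' < mean ν) (h : ratioInf M ν (mean ν') = ⊤) :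
    ¬ DiscrimEquiv M :=
  fun hM => ENNReal.top_ne_one (h ▸ hM ν hν ν' hν' hlt)

lemma bern_eq_mixDirac (p : ℝ) : bern p = mixDirac (1 - p) (Measure.dirac 1) 0 := by
  rw [bern, mixDirac, sub_sub_cancel, add_comm]

/-- Example 1: the moment-bounded class `L_{1,1}` is not discrimination
equivalent; specifically, with `ν = δ₁` and `ν' = Bernoulli(p)`, both in `L_{1,1}` with
`m(ν) > m(ν')`, the infimum of `KL(ν̃,ν)/KL_inf(ν̃, m(ν'))` over `ν̃ ∈ L_{1,1}` with
`mean ν̃ < m(ν')` equals `+∞`. -/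
theorem momentClass_not_discrimination_equivalent
    (p : ℝ) (hp : p ∈ Set.Ioo (0 : ℝ) 1) :
    Measure.dirac (1 : ℝ) ∈ momentClass 1 1 ∧ bern p ∈ momentClass 1 1 ∧
    mean (bern p) < mean (Measure.dirac (1 : ℝ)) ∧
    ratioInf (momentClass 1 1) (Measure.dirac (1 : ℝ)) (mean (bern p)) = ⊤ ∧
    ¬ DiscrimEquiv (momentClass 1 1) := by
  obtain ⟨hp0, hp1⟩ := hp
  have hδ : Measure.dirac (1 : ℝ) ∈ momentClass 1 1 := dirac_mem_momentClass (by norm_num)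
  have hbern : bern p ∈ momentClass 1 1 := bern_eq_mixDirac p ▸
    mixDirac_mem_momentClass hδ (by norm_num) ⟨by linarith, by linarith⟩
  have hmean : mean (bern p) = p := by
    rw [bern_eq_mixDirac, mean_mixDirac (integrable_dirac enorm_lt_top) ⟨by linarith, by linarith⟩]
    simp [mean]
  have hlt : mean (bern p) < mean (Measure.dirac (1 : ℝ)) := by
    rwa [hmean, mean, integral_dirac]
  have hratio : ratioInf (momentClass 1 1) (Measure.dirac (1 : ℝ)) (mean (bern p)) = ⊤ := by
    refine ratioInf_eq_top fun ν hν hνp => ?_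
    have := hν.1
    rw [hmean] at hνp ⊢
    refine ⟨KL_dirac_eq_top (by linarith), KLinf_ne_top_of_mixDirac_mem
      (integrable_id_of_mem_momentClass zero_le_one hν) hνp hp1 fun c hc t ht => ?_⟩
    refine mixDirac_mem_momentClass hν (Real.rpow_le_one (abs_nonneg c) ?_ (by norm_num)) ht
    exact abs_le.2 ⟨by linarith [hc.1], hc.2.le⟩
  exact ⟨hδ, hbern, hlt, hratio, not_discrimEquiv_of_ratioInf_eq_top hδ hbern hlt hratio⟩

end BanditFrag
end
end

section
/- The bounded-support class L_{[0,1]} of probability distributions on [0,1] is not discrimination equivalent: taking ν = Bernoulli(p) and ν' = Bernoulli(q) with 0 < q < p < 1, every ν̃ ∈ L_{[0,1]} with m(ν̃) < q and KL(ν̃, ν) < ∞ is either Bernoulli(r) with r ∈ (0,1), r < q, or δ₀, and in each case KL(ν̃, ν) / KL_inf^{L_{[0,1]}}(ν̃, q) ≠ 1; hence inf { KL(ν̃, ν) / KL_inf^{L_{[0,1]}}(ν̃, q) : ν̃ ∈ L_{[0,1]}, m(ν̃) < q } ≠ 1. -/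
/-! A measure on `[0, 1]` at finite KL divergence from `Bernoulli(p)` is absolutely continuous
with respect to it, hence is itself a `Bernoulli(r)`, and `r < q` is its mean. Testing
`KL_inf(Bernoulli(r), q)` against `Bernoulli(q)` bounds it by `kl(r, q)`, which is at most
`-log(1 - q)`, while the three-point inequality `kl(r, q) + kl(q, p) ≤ kl(r, p)` holds for
`r ≤ q ≤ p`. So every ratio `KL(ν̃, ν) / KL_inf(ν̃, q)` is at least
`1 + kl(q, p) / -log(1 - q) > 1`, unless it is the junk value `∞ / ∞ = 0`; either way the
infimum is not `1`. -/

open MeasureTheory ProbabilityTheory Filter Set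
open scoped ENNReal Classical

noncomputable section

namespace BanditFrag

/-- The class of probability distributions supported on `[a, b]`. -/
def boundedClass (a b : ℝ) : Set (Measure ℝ) :=
  {ν | IsProbabilityMeasure ν ∧ ν (Set.Icc a b)ᶜ = 0}

lemma measure_eq_smul_dirac_add_smul_dirac {α : Type*} [MeasurableSpace α]
    [MeasurableSingletonClass α] {μ : Measure α} {a b : α} (hab : a ≠ b)
    (h : μ {a, b}ᶜ = 0) : μ = μ {a} • Measure.dirac a + μ {b} • Measure.dirac b := by
  calc μ = μ.restrict ({a} ∪ {b}) := (Measure.restrict_eq_self_of_ae_mem h).symm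
    _ = μ {a} • Measure.dirac a + μ {b} • Measure.dirac b := by
      rw [Measure.restrict_union (Set.disjoint_singleton.mpr hab) (measurableSet_singleton b),
        Measure.restrict_singleton, Measure.restrict_singleton]

lemma absolutelyContinuous_of_KL_ne_top {ν μ : Measure ℝ} (h : KL ν μ ≠ ⊤) : ν ≪ μ := by
  by_contra hac
  exact h (by simp [KL, hac])

lemma KL_withDensity {μ : Measure ℝ} [SigmaFinite μ] {g : ℝ → ℝ≥0∞} (hg : Measurable g)
    (hint : Integrable (fun x => Real.log (g x).toReal) (μ.withDensity g)) :
    KL (μ.withDensity g) μ = ENNReal.ofReal (∫ x, Real.log (g x).toReal ∂μ.withDensity g) := by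
  have hac := withDensity_absolutelyContinuous μ g
  have hlog : (fun x => Real.log (((μ.withDensity g).rnDeriv μ x).toReal))
      =ᵐ[μ.withDensity g] fun x => Real.log (g x).toReal := by
    filter_upwards [hac.ae_le (Measure.rnDeriv_withDensity μ hg)] with x hx
    rw [hx]
  rw [KL, if_pos ⟨hac, hint.congr hlog.symm⟩, integral_congr_ae hlog]

lemma biInf_eq_bot_or_le {α ι : Type*} [CompleteLinearOrder α] {s : Set ι} {f : ι → α} {c : α}
    (h : ∀ i ∈ s, f i = ⊥ ∨ c ≤ f i) : ⨅ i ∈ s, f i = ⊥ ∨ c ≤ ⨅ i ∈ s, f i := by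
  by_cases h0 : ∀ i ∈ s, f i ≠ ⊥
  · exact Or.inr (le_iInf₂ fun i hi => (h i hi).resolve_left (h0 i hi))
  · simp only [not_forall, not_not] at h0
    obtain ⟨i, hi, hfi⟩ := h0
    exact Or.inl (eq_bot_iff.mpr (hfi ▸ iInf₂_le i hi))

lemma sub_le_mul_log_div {a b : ℝ} (ha : 0 ≤ a) (hb : 0 < b) : a - b ≤ a * Real.log (a / b) := by
  rcases ha.eq_or_lt with rfl | ha
  · simpa using hb.le
  · have h := mul_le_mul_of_nonneg_left (Real.one_sub_inv_le_log_of_pos (div_pos ha hb)) ha.le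
    rwa [inv_div, mul_sub, mul_one, mul_div_cancel₀ _ ha.ne'] at h

lemma sub_lt_mul_log_div {a b : ℝ} (ha : 0 < a) (hb : 0 < b) (hab : a ≠ b) :
    a - b < a * Real.log (a / b) := by
  have hlog := Real.log_lt_sub_one_of_pos (div_pos hb ha)
    (by rwa [ne_eq, div_eq_one_iff_eq ha.ne', eq_comm])
  have h := mul_lt_mul_of_pos_left hlog ha
  rw [mul_sub, mul_one, mul_div_cancel₀ _ ha.ne'] at h
  rw [← neg_neg (Real.log (a / b)), ← Real.log_inv, inv_div]
  linarith

lemma mul_log_div_split (x : ℝ) {b c : ℝ} (hb : 0 < b) (hc : 0 < c) :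
    x * Real.log (x / c) = x * Real.log (x / b) + x * Real.log (b / c) := by
  rcases eq_or_ne x 0 with rfl | hx
  · simp
  · rw [← mul_add, ← Real.log_mul (div_ne_zero hx hb.ne') (div_ne_zero hb.ne' hc.ne'),
      div_mul_div_cancel₀ hb.ne']

lemma ofReal_one_add_div_le_ofReal_div {a b Δ B : ℝ} {C : ℝ≥0∞} (hΔ : 0 < Δ) (hb : 0 ≤ b)
    (hbB : b ≤ B) (hab : b + Δ ≤ a) (hC : C ≤ ENNReal.ofReal b) :
    ENNReal.ofReal (1 + Δ / B) ≤ ENNReal.ofReal a / C := by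
  rcases hb.eq_or_lt with rfl | hb
  · rw [nonpos_iff_eq_zero.mp (hC.trans_eq ENNReal.ofReal_zero),
      ENNReal.div_zero (ENNReal.ofReal_pos.mpr (by linarith)).ne']
    exact le_top
  calc ENNReal.ofReal (1 + Δ / B) ≤ ENNReal.ofReal (a / b) := by
        refine ENNReal.ofReal_le_ofReal ?_
        calc 1 + Δ / B ≤ 1 + Δ / b := by gcongr
          _ = (b + Δ) / b := by field_simp
          _ ≤ a / b := by gcongr
    _ = ENNReal.ofReal a / ENNReal.ofReal b := ENNReal.ofReal_div_of_pos hb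
    _ ≤ ENNReal.ofReal a / C := ENNReal.div_le_div_left hC _

lemma isProbabilityMeasure_bern {r : ℝ} (hr : r ∈ Icc 0 1) : IsProbabilityMeasure (bern r) := by
  constructor
  simp [bern, ← ENNReal.ofReal_add hr.1 (sub_nonneg.mpr hr.2)]

lemma bern_compl_one_zero (p : ℝ) : bern p {1, 0}ᶜ = 0 := by
  simp [bern]

lemma bern_mem_boundedClass {r : ℝ} (hr : r ∈ Icc 0 1) : bern r ∈ boundedClass 0 1 :=
  ⟨isProbabilityMeasure_bern hr,
    measure_mono_null (compl_subset_compl.mpr (by norm_num [insert_subset_iff]))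
      (bern_compl_one_zero r)⟩

lemma integrable_smul_dirac (f : ℝ → ℝ) {c : ℝ≥0∞} (hc : c ≠ ⊤) (a : ℝ) :
    Integrable f (c • Measure.dirac a) :=
  (integrable_dirac enorm_lt_top).smul_measure hc

lemma integrable_bern (f : ℝ → ℝ) (r : ℝ) : Integrable f (bern r) :=
  (integrable_smul_dirac f ENNReal.ofReal_ne_top 1).add_measure
    (integrable_smul_dirac f ENNReal.ofReal_ne_top 0)

lemma integral_bern (f : ℝ → ℝ) {r : ℝ} (hr : r ∈ Icc 0 1) :
    ∫ x, f x ∂bern r = r * f 1 + (1 - r) * f 0 := by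
  rw [bern, integral_add_measure (integrable_smul_dirac f ENNReal.ofReal_ne_top 1)
      (integrable_smul_dirac f ENNReal.ofReal_ne_top 0),
    integral_smul_measure, integral_smul_measure, integral_dirac, integral_dirac,
    ENNReal.toReal_ofReal hr.1, ENNReal.toReal_ofReal (sub_nonneg.mpr hr.2), smul_eq_mul,
    smul_eq_mul]

lemma mean_bern {r : ℝ} (hr : r ∈ Icc 0 1) : mean (bern r) = r := by
  simp [mean, integral_bern _ hr]

lemma bern_zero : bern 0 = Measure.dirac 0 := by
  simp [bern]

lemma eq_bern_of_absolutelyContinuous {ν : Measure ℝ} [IsProbabilityMeasure ν] {p : ℝ}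
    (h : ν ≪ bern p) : ∃ r ∈ Icc (0 : ℝ) 1, ν = bern r := by
  have hdecomp := measure_eq_smul_dirac_add_smul_dirac one_ne_zero (h (bern_compl_one_zero p))
  have htotal : ν {1} + ν {0} = 1 := by
    simpa using congrArg (fun μ : Measure ℝ => μ univ) hdecomp.symm
  have hle : ν {1} ≤ 1 := prob_le_one
  refine ⟨(ν {1}).toReal, ⟨ENNReal.toReal_nonneg, ENNReal.toReal_le_of_le_ofReal zero_le_one
    (by simpa using hle)⟩, ?_⟩
  have h1 : ENNReal.ofReal (ν {1}).toReal = ν {1} := ENNReal.ofReal_toReal (measure_ne_top ν _)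
  have h0 : ENNReal.ofReal (1 - (ν {1}).toReal) = ν {0} := by
    rw [ENNReal.ofReal_sub _ ENNReal.toReal_nonneg, ENNReal.ofReal_one, h1, ← htotal,
      ENNReal.add_sub_cancel_left (measure_ne_top ν _)]
  rw [bern, h1, h0]
  exact hdecomp

def bernKL (r s : ℝ) : ℝ := r * Real.log (r / s) + (1 - r) * Real.log ((1 - r) / (1 - s))

lemma bernKL_nonneg {r s : ℝ} (hr : r ∈ Icc 0 1) (hs : s ∈ Ioo 0 1) : 0 ≤ bernKL r s := by
  have h1 := sub_le_mul_log_div hr.1 hs.1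
  have h2 := sub_le_mul_log_div (sub_nonneg.mpr hr.2) (sub_pos.mpr hs.2)
  unfold bernKL
  linarith

lemma bernKL_pos {r s : ℝ} (hr : r ∈ Ioc 0 1) (hs : s ∈ Ioo 0 1) (hrs : r ≠ s) :
    0 < bernKL r s := by
  have h1 := sub_lt_mul_log_div hr.1 hs.1 hrs
  have h2 := sub_le_mul_log_div (sub_nonneg.mpr hr.2) (sub_pos.mpr hs.2)
  unfold bernKL
  linarith

lemma bernKL_le_neg_log_one_sub {r q : ℝ} (hr : 0 ≤ r) (hrq : r ≤ q) (hq : q < 1) :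
    bernKL r q ≤ -Real.log (1 - q) := by
  have hr1 : 0 < 1 - r := by linarith
  have hq1 : 0 < 1 - q := by linarith
  have h1 : r * Real.log (r / q) ≤ 0 :=
    mul_nonpos_of_nonneg_of_nonpos hr
      (Real.log_nonpos (div_nonneg hr (hr.trans hrq)) (div_le_one_of_le₀ hrq (hr.trans hrq)))
  have hL : 0 ≤ Real.log ((1 - r) / (1 - q)) :=
    Real.log_nonneg ((one_le_div hq1).mpr (by linarith))
  have h2 : (1 - r) * Real.log ((1 - r) / (1 - q)) ≤ Real.log ((1 - r) / (1 - q)) :=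
    mul_le_of_le_one_left hL (by linarith)
  have h3 : Real.log (1 - r) ≤ 0 := Real.log_nonpos hr1.le (by linarith)
  unfold bernKL
  rw [Real.log_div hr1.ne' hq1.ne'] at h2 ⊢
  linarith

lemma bernKL_add_bernKL_le {r q p : ℝ} (hrq : r ≤ q) (hq : 0 < q) (hqp : q ≤ p)
    (hp : p < 1) : bernKL r q + bernKL q p ≤ bernKL r p := by
  have hp0 : 0 < p := hq.trans_le hqp
  have e1 := mul_log_div_split r hq hp0
  have e2 := mul_log_div_split (1 - r) (by linarith : 0 < 1 - q) (by linarith : 0 < 1 - p)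
  have hlog_qp : Real.log (q / p) ≤ 0 :=
    Real.log_nonpos (div_nonneg hq.le hp0.le) (div_le_one_of_le₀ hqp hp0.le)
  have hlog_one_sub : 0 ≤ Real.log ((1 - q) / (1 - p)) :=
    Real.log_nonneg ((one_le_div (by linarith)).mpr (by linarith))
  unfold bernKL
  rw [e1, e2]
  -- the difference of the two sides is `(q - r) (log ((1 - q) / (1 - p)) - log (q / p))`
  nlinarith [mul_nonneg (sub_nonneg.mpr hrq) (sub_nonneg.mpr (hlog_qp.trans hlog_one_sub))]

lemma KL_bern {r s : ℝ} (hr : r ∈ Icc 0 1) (hs : s ∈ Ioo 0 1) :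
    KL (bern r) (bern s) = ENNReal.ofReal (bernKL r s) := by
  have hs' : 0 < 1 - s := sub_pos.mpr hs.2
  set g : ℝ → ℝ≥0∞ := fun x => if x = 1 then ENNReal.ofReal (r / s)
    else ENNReal.ofReal ((1 - r) / (1 - s))
  have hg : Measurable g := Measurable.ite (measurableSet_singleton 1) measurable_const
    measurable_const
  have hW : (bern s).withDensity g = bern r := by
    have e1 : ENNReal.ofReal s * ENNReal.ofReal (r / s) = ENNReal.ofReal r := by
      rw [← ENNReal.ofReal_mul hs.1.le, mul_div_cancel₀ _ hs.1.ne']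
    have e0 : ENNReal.ofReal (1 - s) * ENNReal.ofReal ((1 - r) / (1 - s)) =
        ENNReal.ofReal (1 - r) := by
      rw [← ENNReal.ofReal_mul hs'.le, mul_div_cancel₀ _ hs'.ne']
    rw [bern, bern, withDensity_add_measure, withDensity_smul_measure, withDensity_smul_measure,
      dirac_withDensity, dirac_withDensity, smul_smul, smul_smul]
    simp [g, e1, e0]
  have := isProbabilityMeasure_bern (Ioo_subset_Icc_self hs)
  rw [← hW, KL_withDensity hg (by rw [hW]; exact integrable_bern _ r), hW, integral_bern _ hr]
  simp [g, bernKL, ENNReal.toReal_ofReal (div_nonneg hr.1 hs.1.le),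
    ENNReal.toReal_ofReal (div_nonneg (sub_nonneg.mpr hr.2) hs'.le)]

lemma KLinf_bern_le {r q : ℝ} (hr : r ∈ Icc 0 1) (hq : q ∈ Ioo 0 1) :
    KLinf (boundedClass 0 1) (bern r) q ≤ ENNReal.ofReal (bernKL r q) := by
  rw [← KL_bern hr hq]
  have hq' := Ioo_subset_Icc_self hq
  exact iInf₂_le (bern q) ⟨bern_mem_boundedClass hq', (mean_bern hq').ge⟩

lemma ofReal_le_KL_bern_div_KLinf {r q p : ℝ} (hr : 0 ≤ r) (hrq : r < q) (hqp : q < p)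
    (hp : p < 1) :
    ENNReal.ofReal (1 + bernKL q p / -Real.log (1 - q)) ≤
      KL (bern r) (bern p) / KLinf (boundedClass 0 1) (bern r) q := by
  have hq : 0 < q := hr.trans_lt hrq
  have hr' : r ∈ Icc (0 : ℝ) 1 := ⟨hr, by linarith⟩
  have hq' : q ∈ Ioo (0 : ℝ) 1 := ⟨hq, hqp.trans hp⟩
  rw [KL_bern hr' ⟨hq.trans hqp, hp⟩]
  exact ofReal_one_add_div_le_ofReal_div
    (bernKL_pos (Ioo_subset_Ioc_self hq') ⟨hq.trans hqp, hp⟩ hqp.ne)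
    (bernKL_nonneg hr' hq') (bernKL_le_neg_log_one_sub hr hrq.le hq'.2)
    (bernKL_add_bernKL_le hrq.le hq hqp.le hp) (KLinf_bern_le hr' hq')

lemma exists_one_lt_KL_div_KLinf_eq_zero_or_ge {q p : ℝ} (hq : 0 < q) (hqp : q < p)
    (hp : p < 1) : ∃ c > 1, ∀ νt ∈ boundedClass 0 1, mean νt < q →
      KL νt (bern p) / KLinf (boundedClass 0 1) νt q = 0 ∨
        c ≤ KL νt (bern p) / KLinf (boundedClass 0 1) νt q := by
  have hq1 : q < 1 := hqp.trans hp
  refine ⟨ENNReal.ofReal (1 + bernKL q p / -Real.log (1 - q)), ENNReal.one_lt_ofReal.mpr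
    (lt_add_of_pos_right _ (div_pos (bernKL_pos ⟨hq, hq1.le⟩ ⟨hq.trans hqp, hp⟩ hqp.ne)
      (neg_pos.mpr (Real.log_neg (by linarith) (by linarith))))), fun νt hν hmean => ?_⟩
  have := hν.1
  by_cases hKL : KL νt (bern p) = ⊤
  · -- `∞ / ∞ = 0` in `ℝ≥0∞`: this is the only way a ratio can fall below `c`
    rw [hKL, ENNReal.top_div]
    split_ifs <;> simp
  · obtain ⟨r, hr, rfl⟩ := eq_bern_of_absolutelyContinuous (absolutelyContinuous_of_KL_ne_top hKL)
    rw [mean_bern hr] at hmean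
    exact Or.inr (ofReal_le_KL_bern_div_KLinf hr.1 hmean hqp hp)

/-- Example 2: the bounded-support class `L_{[0,1]}` is not discrimination
equivalent: with `ν = Bernoulli(p)`, `ν' = Bernoulli(q)` and `0 < q < p < 1`, every
`ν̃ ∈ L_{[0,1]}` with `mean ν̃ < q` and `KL(ν̃, ν) < ∞` is either `Bernoulli(r)` with
`r ∈ (0,1)`, `r < q`, or `δ₀`; in each case the ratio `KL(ν̃,ν)/KL_inf(ν̃,q) ≠ 1`; and the
infimum of the ratio is `≠ 1`, so `L_{[0,1]}` is not discrimination equivalent. -/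
theorem boundedClass_not_discrimination_equivalent
    (p q : ℝ) (hq : 0 < q) (hqp : q < p) (hp : p < 1) :
    (∀ νt ∈ boundedClass 0 1, mean νt < q → KL νt (bern p) < ⊤ →
      (∃ r : ℝ, 0 < r ∧ r < 1 ∧ r < q ∧ νt = bern r) ∨ νt = Measure.dirac (0 : ℝ)) ∧
    (∀ νt ∈ boundedClass 0 1, mean νt < q → KL νt (bern p) < ⊤ →
      KL νt (bern p) / KLinf (boundedClass 0 1) νt q ≠ 1) ∧
    ratioInf (boundedClass 0 1) (bern p) q ≠ 1 ∧
    ¬ DiscrimEquiv (boundedClass 0 1) := by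
  have hq1 : q < 1 := hqp.trans hp
  obtain ⟨c, hc, hratio⟩ := exists_one_lt_KL_div_KLinf_eq_zero_or_ge hq hqp hp
  have ne_one : ∀ x : ℝ≥0∞, x = 0 ∨ c ≤ x → x ≠ 1 := by
    rintro x (rfl | hx)
    exacts [zero_ne_one, (hc.trans_le hx).ne']
  have hinf : ratioInf (boundedClass 0 1) (bern p) q ≠ 1 :=
    ne_one _ (biInf_eq_bot_or_le fun νt hν => hratio νt hν.1 hν.2)
  refine ⟨fun νt hν hmean hKL => ?_, fun νt hν hmean _ => ne_one _ (hratio νt hν hmean), hinf,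
    fun hDE => hinf ?_⟩
  · have := hν.1
    obtain ⟨r, hr, rfl⟩ :=
      eq_bern_of_absolutelyContinuous (absolutelyContinuous_of_KL_ne_top hKL.ne)
    rw [mean_bern hr] at hmean
    rcases hr.1.eq_or_lt with rfl | hr0
    · exact Or.inr bern_zero
    · exact Or.inl ⟨r, hr0, hmean.trans hq1, hmean, rfl⟩
  · have hp' : p ∈ Icc (0 : ℝ) 1 := ⟨(hq.trans hqp).le, hp.le⟩
    have hq' : q ∈ Icc (0 : ℝ) 1 := ⟨hq.le, hq1.le⟩
    simpa only [mean_bern hq'] using hDE (bern p) (bern_mem_boundedClass hp') (bern q)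
      (bern_mem_boundedClass hq') (by rwa [mean_bern hp', mean_bern hq'])

end BanditFrag
end
end

section
/- In the regret analysis of Generalized KL_inf-UCB with exploration functions f_a(t) = log(t) + 2 log log(t) + g(N_a(t)): for a suboptimal arm a in an environment with optimal mean μ₁, let E_{1j} := 1{ N_a(j)·(KL_inf(ν_a, μ₁) − d) ≤ f_a(j), A_j = a }. Then for T ≥ K+1 and d > 0 with d < KL_inf(ν_a, μ₁), the pathwise bound Σ_{j=1}^T E_{1j} ≤ log(T)/(KL_inf(ν_a, μ₁) − d) + O(log log(T)) holds. -/
/-!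
Distinct rounds `j` with `A_j = a` have distinct pull counts `N_a(j)`, so the sum is at most the
number of values `n` that can occur. Each counted `n` satisfies
`n Δ ≤ log T + 2 log log T + C₁ log (1 + n) + C₂` with `Δ = KL_inf(ν_a, μ₁) - d`; bounding
`C₁ log (1 + n)` first by `(1 + n) Δ / 2 + O(1)` gives `n = O(log T)`, and feeding this back gives
`n + 1 ≤ log T / Δ + O(log log T)`.
-/

open MeasureTheory ProbabilityTheory Filter Set
open scoped ENNReal Classical

noncomputable section

namespace BanditFrag

section Growth

open Real

lemma log_le_log_of_one_le {u v : ℝ} (hu : 0 ≤ u) (huv : u ≤ v) (hv : 1 ≤ v) :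
    log u ≤ log v := by
  rcases hu.eq_or_lt with rfl | hu
  · simpa using log_nonneg hv
  · exact log_le_log hu huv

lemma one_lt_log_three : 1 < log 3 := by
  rw [lt_log_iff_exp_lt (by norm_num)]
  exact exp_one_lt_three

variable {C₁ Δ : ℝ}

lemma exists_mul_log_le_mul_add (hC₁ : 0 ≤ C₁) (hΔ : 0 < Δ) :
    ∃ B, ∀ m : ℝ, 0 < m → C₁ * log m ≤ Δ * m + B := by
  rcases hC₁.eq_or_lt with rfl | hC₁
  · exact ⟨0, fun m hm => by nlinarith⟩
  refine ⟨C₁ * (log (C₁ / Δ) - 1), fun m hm => ?_⟩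
  -- `log y ≤ y - 1` at `y = Δ m / C₁`
  have h := log_le_sub_one_of_pos (show 0 < Δ * m / C₁ by positivity)
  rw [log_div (by positivity) hC₁.ne', log_mul hΔ.ne' hm.ne'] at h
  have hcancel : C₁ * (Δ * m / C₁) = Δ * m := by field_simp
  have hlogC : log C₁ = log (C₁ / Δ) + log Δ := by
    rw [log_div hC₁.ne' hΔ.ne']; ring
  nlinarith [mul_le_mul_of_nonneg_left h hC₁.le]

lemma exists_le_mul_of_mul_le_add_log (hC₁ : 0 ≤ C₁) (hΔ : 0 < Δ) (c₀ : ℝ) :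
    ∃ D > 0, ∀ m x : ℝ, 0 < m → 1 ≤ x →
      m * Δ ≤ x + 2 * log x + C₁ * log m + c₀ → m ≤ D * x := by
  obtain ⟨B, hB⟩ := exists_mul_log_le_mul_add hC₁ (half_pos hΔ)
  refine ⟨2 * (3 + |B + c₀|) / Δ, by positivity, fun m x hm hx H => ?_⟩
  have hlog : log x ≤ x := log_le_self (by linarith)
  have hconst : B + c₀ ≤ |B + c₀| * x :=
    (le_abs_self _).trans (le_mul_of_one_le_right (abs_nonneg _) hx)
  have hmΔ : m * Δ ≤ 2 * (3 + |B + c₀|) * x := by linarith [hB m hm]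
  rw [div_mul_eq_mul_div, le_div_iff₀ hΔ]
  linarith

lemma exists_le_div_add_mul_log_of_mul_le_add_log (hC₁ : 0 ≤ C₁) (hΔ : 0 < Δ) (c₀ : ℝ)
    {ℓ : ℝ} (hℓ : 0 < ℓ) :
    ∃ C > 0, ∀ m x : ℝ, 0 < m → 1 ≤ x → ℓ ≤ log x →
      m * Δ ≤ x + 2 * log x + C₁ * log m + c₀ → m ≤ x / Δ + C * log x := by
  obtain ⟨D, hD, hmD⟩ := exists_le_mul_of_mul_le_add_log hC₁ hΔ c₀
  set c := |C₁ * log D + c₀| / ℓ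
  refine ⟨(2 + C₁ + c) / Δ, by positivity, fun m x hm hx hℓx H => ?_⟩
  -- bootstrap: `m ≤ D x` turns `log m` into `log D + log x`
  have hlogm : log m ≤ log D + log x := by
    rw [← log_mul hD.ne' (by positivity)]
    exact log_le_log hm (hmD m x hm hx H)
  have hconst : C₁ * log D + c₀ ≤ c * log x := by
    calc C₁ * log D + c₀ ≤ c * ℓ := by
          rw [div_mul_cancel₀ _ hℓ.ne']; exact le_abs_self _
      _ ≤ c * log x := by gcongr
  have hmΔ : m * Δ ≤ x + (2 + C₁ + c) * log x := by
    nlinarith [mul_le_mul_of_nonneg_left hlogm hC₁]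
  rw [div_mul_eq_mul_div, ← add_div, le_div_iff₀ hΔ]
  linarith

end Growth

section ExplorationFunction

open Real

lemma fUCB_le_fUCB_of_le (C₁ C₂ : ℝ) (n : ℕ) {j T : ℕ} (hjT : j ≤ T) (hT : 1 ≤ log T) :
    fUCB C₁ C₂ n j ≤ fUCB C₁ C₂ n T := by
  have hT₁ : (1 : ℝ) ≤ T := hT.trans (log_le_self (Nat.cast_nonneg T))
  have hlog : log j ≤ log T := log_le_log_of_one_le (Nat.cast_nonneg j) (by exact_mod_cast hjT) hT₁
  have hloglog : log (log j) ≤ log (log T) :=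
    log_le_log_of_one_le (log_natCast_nonneg j) hlog hT
  simp only [fUCB]
  linarith

lemma exists_add_one_le_of_mul_le_fUCB {C₁ Δ : ℝ} (hC₁ : 0 ≤ C₁) (hΔ : 0 < Δ) (C₂ : ℝ) :
    ∃ C > 0, ∀ n T : ℕ, 3 ≤ T → n * Δ ≤ fUCB C₁ C₂ n T →
      (n : ℝ) + 1 ≤ log T / Δ + C * log (log T) := by
  obtain ⟨C, hC, hbound⟩ :=
    exists_le_div_add_mul_log_of_mul_le_add_log hC₁ hΔ (C₂ + Δ) (ℓ := log (log 3))
      (log_pos one_lt_log_three)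
  refine ⟨C, hC, fun n T hT H => ?_⟩
  have hlogT : log 3 ≤ log T := log_le_log (by norm_num) (by exact_mod_cast hT)
  simp only [fUCB, gFun] at H
  have := hbound (1 + n) (log T) (by positivity) (by linarith [one_lt_log_three])
    (log_le_log (log_pos (by norm_num)) hlogT) (by linarith)
  linarith

end ExplorationFunction

section Counting

variable {K : ℕ} (π : Policy K) (z : ℕ → Fin K → ℝ) (a : Fin K)

lemma pulls_strictMonoOn : StrictMonoOn (pulls π z a) {j | arm π z j = a} := by
  intro j₁ hj₁ j₂ _ hlt
  apply Finset.card_lt_card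
  refine Finset.ssubset_iff_of_subset
    (Finset.filter_subset_filter _ (Finset.range_subset_range.mpr hlt.le)) |>.mpr ?_
  exact ⟨j₁, Finset.mem_filter.mpr ⟨Finset.mem_range.mpr hlt, hj₁⟩, by simp⟩

lemma card_le_of_arm_eq_of_pulls_lt {S : Finset ℕ} {m : ℕ}
    (h : ∀ j ∈ S, arm π z j = a ∧ pulls π z a j < m) : S.card ≤ m := by
  simpa using Finset.card_le_card_of_injOn (t := Finset.range m) (pulls π z a)
    (fun j hj => Finset.mem_range.mpr (h j hj).2)
    ((pulls_strictMonoOn π z a).injOn.mono fun j hj => (h j hj).1)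

end Counting

/-- Lemma 1, bounding `Σ E_{1j}`: in the regret analysis of Generalized
`KL_inf`-UCB, the pathwise bound
`Σ_{j=1}^T 1{N_a(j)(KL_inf(ν_a,μ₁) − d) ≤ f_a(j), A_j = a}
  ≤ log T/(KL_inf(ν_a,μ₁) − d) + O(log log T)` holds. -/
theorem sum_E1_bound
    {K : ℕ} (hK : 2 ≤ K) (L : Set (Measure ℝ)) (C₁ C₂ : ℝ) (hC₁ : 0 < C₁)
    (π : Policy K)
    (ν : Fin K → Measure ℝ)
    (a : Fin K)
    (d : ℝ)
    (hd : d < (KLinf L (ν a) (mean (ν ⟨0, by omega⟩))).toReal) :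
    ∃ C > (0 : ℝ), ∀ z : ℕ → Fin K → ℝ, ∀ T : ℕ, K + 1 ≤ T →
      (∑ j ∈ Finset.range T,
          (if (pulls π z a j : ℝ) *
                ((KLinf L (ν a) (mean (ν ⟨0, by omega⟩))).toReal - d)
                ≤ fUCB C₁ C₂ (pulls π z a j) j ∧ arm π z j = a
            then (1 : ℝ) else 0))
        ≤ Real.log T / ((KLinf L (ν a) (mean (ν ⟨0, by omega⟩))).toReal - d)
            + C * Real.log (Real.log T) := by
  set Δ := (KLinf L (ν a) (mean (ν ⟨0, by omega⟩))).toReal - d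
  have hΔ : 0 < Δ := sub_pos.mpr hd
  obtain ⟨C, hC, hgrowth⟩ := exists_add_one_le_of_mul_le_fUCB hC₁.le hΔ C₂
  refine ⟨C, hC, fun z T hT => ?_⟩
  have hT3 : 3 ≤ T := by omega
  have hlogT : 1 ≤ Real.log T :=
    (one_lt_log_three.trans_le (Real.log_le_log (by norm_num) (by exact_mod_cast hT3))).le
  set r := Real.log T / Δ + C * Real.log (Real.log T)
  have hr : 0 ≤ r := by
    have := Real.log_nonneg hlogT
    positivity
  rw [Finset.sum_boole]
  -- each counted round has its own value of `N_a(j)`, and all these values are `< r`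
  refine (Nat.cast_le.mpr (card_le_of_arm_eq_of_pulls_lt π z a (m := ⌊r⌋₊) fun j hj => ?_)).trans
    (Nat.floor_le hr)
  obtain ⟨hjT, hE, harm⟩ := Finset.mem_filter.mp hj
  refine ⟨harm, Nat.lt_iff_add_one_le.mpr (Nat.le_floor ?_)⟩
  push_cast
  exact hgrowth _ T hT3
    (hE.trans (fUCB_le_fUCB_of_le C₁ C₂ _ (Finset.mem_range.mp hjT).le hlogT))

end BanditFrag
end
end
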